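/- Let X be a finite subset of α with n = |X| ≥ 3 so that I = I(n) ≥ 2. Let x⁺ ∈ α with x⁺ ∉ X and let x⁻ ∈ X, and suppose x⁻ ≤ x_(I−1) and x⁺ > x_(I). Set X' = (X \ {x⁻}) ∪ {x⁺}, so |X'| = n and the median index is unchanged. Then L(X') = ({x_(I)} ∪ L(X)) \ {x⁻} and R(X') = ({x⁺} ∪ R(X)) \ {x_(I)}. -/

import Mathlib

open Finset

/-- Median index `I(n) = ⌈n/2⌉`. -/
def medianIdx (n : ℕ) : ℕ := (n + 1) / 2

/-- 1-indexed rank of `x` in `X`: the number of elements of `X` that are `≤ x`.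
For `x ∈ X`, `rank X x = i` means `x` is the `i`-th smallest element of `X`. -/
def rank {α : Type*} [LinearOrder α] (X : Finset α) (x : α) : ℕ :=
  (X.filter (fun y => y ≤ x)).card

/-- Left part of the median partition: elements of rank `< I(|X|)`. -/
def medL {α : Type*} [LinearOrder α] (X : Finset α) : Finset α :=
  X.filter (fun x => rank X x < medianIdx X.card)

/-- Right part of the median partition: elements of rank `≥ I(|X|)`. -/
def medR {α : Type*} [LinearOrder α] (X : Finset α) : Finset α :=
  X.filter (fun x => medianIdx X.card ≤ rank X x)

/-!
Everything is read off from ranks. For `c ∈ X`, comparing ranks with `rank X c` is the same as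
comparing elements with `c`, so `L(X)` and `R(X)` are the elements of `X` below, resp. from,
`x_(I)`. Since `x⁻ < x_(I) < x⁺`, the replacement lowers the rank of `x_(I)` by one, so in `X'` it
is the last element of the left part, which turns both sides into comparisons with `x_(I)`.
-/

section Rank

variable {α : Type*} [LinearOrder α] {X : Finset α} {a b c : α}

lemma rank_le_rank (h : a ≤ b) : rank X a ≤ rank X b :=
  card_le_card <| monotone_filter_right X fun _ _ hy => hy.trans h

lemma rank_lt_rank (hb : b ∈ X) (h : a < b) : rank X a < rank X b := by
  refine card_lt_card ⟨monotone_filter_right X fun _ _ hy => hy.trans h.le, fun hsub => ?_⟩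
  have hb' := hsub (mem_filter.2 ⟨hb, le_rfl⟩)
  exact (mem_filter.1 hb').2.not_gt h

lemma rank_pos_of_mem (ha : a ∈ X) : 0 < rank X a :=
  card_pos.2 ⟨a, mem_filter.2 ⟨ha, le_rfl⟩⟩

lemma rank_lt_rank_iff (hb : b ∈ X) : rank X a < rank X b ↔ a < b :=
  ⟨fun h => lt_of_not_ge fun hba => (rank_le_rank hba).not_gt h, rank_lt_rank hb⟩

lemma rank_le_rank_iff (ha : a ∈ X) : rank X a ≤ rank X b ↔ a ≤ b := by
  simpa only [not_lt] using (rank_lt_rank_iff ha (a := b)).not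

lemma rank_erase_of_le (ha : a ∈ X) (h : a ≤ b) : rank (X.erase a) b = rank X b - 1 := by
  rw [rank, filter_erase, card_erase_of_mem (mem_filter.2 ⟨ha, h⟩), rank]

lemma rank_insert_of_lt (h : b < a) : rank (insert a X) b = rank X b := by
  rw [rank, filter_insert, if_neg h.not_ge, rank]

lemma medL_eq_filter_lt (hc : c ∈ X) (h : rank X c = medianIdx #X) :
    medL X = X.filter (· < c) := by
  rw [medL, ← h]
  exact filter_congr fun _ _ => rank_lt_rank_iff hc

lemma medR_eq_filter_le (hc : c ∈ X) (h : rank X c = medianIdx #X) :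
    medR X = X.filter (c ≤ ·) := by
  rw [medR, ← h]
  exact filter_congr fun _ _ => rank_le_rank_iff hc

lemma medL_eq_filter_le (h : rank X c + 1 = medianIdx #X) :
    medL X = X.filter (· ≤ c) := by
  rw [medL, ← h]
  exact filter_congr fun _ hx => by rw [Nat.lt_succ_iff, rank_le_rank_iff hx]

lemma medR_eq_filter_lt (h : rank X c + 1 = medianIdx #X) :
    medR X = X.filter (c < ·) := by
  rw [medR, ← h]
  exact filter_congr fun _ hx => by rw [Nat.add_one_le_iff, rank_lt_rank_iff hx]

end Rank

theorem median_replace_right_left_general {α : Type*} [LinearOrder α]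
    (X : Finset α)
    (xIm1 : α) (hxIm1 : xIm1 ∈ X) (hrankm1 : rank X xIm1 = medianIdx X.card - 1)
    (xI : α) (hxI : xI ∈ X) (hrankI : rank X xI = medianIdx X.card)
    (xp : α) (hxp : xp ∉ X) (xm : α) (hxm : xm ∈ X)
    (hmle : xm ≤ xIm1) (hpgt : xI < xp)
    (X' : Finset α) (hX' : X' = (X \ {xm}) ∪ {xp}) :
    medL X' = (insert xI (medL X)) \ {xm} ∧
    medR X' = (insert xp (medR X)) \ {xI} := by
  have hpos := rank_pos_of_mem hxIm1
  have hmI : xm < xI := hmle.trans_lt <| (rank_lt_rank_iff hxI).1 (by omega)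
  rw [sdiff_singleton_eq_erase, union_singleton] at hX'
  have hcard : #X' = #X := by
    rw [hX', card_insert_of_notMem fun h => hxp (mem_of_mem_erase h), card_erase_of_mem hxm]
    have := card_pos.2 ⟨xm, hxm⟩
    omega
  have hrankI' : rank X' xI + 1 = medianIdx #X' := by
    rw [hX', rank_insert_of_lt hpgt, rank_erase_of_le hxm hmI.le, ← hX', hcard]
    omega
  rw [medL_eq_filter_le hrankI', medR_eq_filter_lt hrankI',
    medL_eq_filter_lt hxI hrankI, medR_eq_filter_le hxI hrankI, hX']
  constructor <;> ext x <;> simp only [mem_filter, mem_insert, mem_erase, mem_sdiff,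
    mem_singleton] <;> grind

theorem median_replace_right_left {α : Type*} [LinearOrder α]
    (X : Finset α) (hn : 3 ≤ X.card)
    (xIm1 : α) (hxIm1 : xIm1 ∈ X) (hrankm1 : rank X xIm1 = medianIdx X.card - 1)
    (xI : α) (hxI : xI ∈ X) (hrankI : rank X xI = medianIdx X.card)
    (xp : α) (hxp : xp ∉ X) (xm : α) (hxm : xm ∈ X)
    (hmle : xm ≤ xIm1) (hpgt : xI < xp)
    (X' : Finset α) (hX' : X' = (X \ {xm}) ∪ {xp}) :
    medL X' = (insert xI (medL X)) \ {xm} ∧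
    medR X' = (insert xp (medR X)) \ {xI} :=
  median_replace_right_left_general X xIm1 hxIm1 hrankm1 xI hxI hrankI xp hxp xm hxm hmle hpgt X'
    hX'
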